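/- All elements of a non-dominated set are equivalent with respect to comparison with (0, 0): if S ⊆ ℤ × ℤ is a non-dominated set, x, y ∈ S, and x ≻_re (0, 0), then y ≻_re (0, 0); similarly, if x ≺_re (0, 0) then y ≺_re (0, 0), and if x =_re (0, 0) then y =_re (0, 0). -/

import Mathlib

/-- Sign sum of a pair of integers: sign(x_r) + sign(x_p). -/
def signsum (x : ℤ × ℤ) : ℤ := x.1.sign + x.2.sign

/-- Pareto dominance: x ≻ y iff x_r ≥ y_r, x_p ≥ y_p, and x ≠ y. -/
def paretoDom (x y : ℤ × ℤ) : Prop := y.1 ≤ x.1 ∧ y.2 ≤ x.2 ∧ x ≠ y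

/-- Resilience dominance: x ≻_re y iff (signsum x = signsum y and x ≻ y)
or signsum x > signsum y. -/
def reDom (x y : ℤ × ℤ) : Prop :=
  (signsum x = signsum y ∧ paretoDom x y) ∨ signsum y < signsum x

/-- Mutual non-domination: x =_re y iff neither x ≻_re y nor y ≻_re x. -/
def reEq (x y : ℤ × ℤ) : Prop := ¬ reDom x y ∧ ¬ reDom y x

/-!
Comparison with `(0, 0)` only sees the sign sum: a point `x ≠ (0, 0)` that Pareto-dominates
`(0, 0)` has a positive sign sum, so `x ≻_re (0, 0)` iff `signsum x > 0`, and dually.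
Two mutually non-dominated points must have the same sign sum, since otherwise the larger
one dominates.
-/

lemma signsum_pos_of_paretoDom_zero {x : ℤ × ℤ} (h : paretoDom x (0, 0)) : 0 < signsum x := by
  obtain ⟨h₁, h₂, hne⟩ := h
  have hpos : 0 < x.1 ∨ 0 < x.2 := by
    by_contra! hc
    exact hne (Prod.ext (by simp only; omega) (by simp only; omega))
  have := Int.sign_nonneg_iff.2 h₁
  have := Int.sign_nonneg_iff.2 h₂
  unfold signsum
  rcases hpos with h | h <;> have := Int.sign_eq_one_of_pos h <;> omega

lemma signsum_neg_of_zero_paretoDom {x : ℤ × ℤ} (h : paretoDom (0, 0) x) : signsum x < 0 := by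
  obtain ⟨h₁, h₂, hne⟩ := h
  have hneg : x.1 < 0 ∨ x.2 < 0 := by
    by_contra! hc
    exact hne (Prod.ext (by simp only; omega) (by simp only; omega))
  have := Int.sign_nonpos_iff.2 h₁
  have := Int.sign_nonpos_iff.2 h₂
  unfold signsum
  rcases hneg with h | h <;> have := Int.sign_eq_neg_one_of_neg h <;> omega

lemma reDom_zero_iff {x : ℤ × ℤ} : reDom x (0, 0) ↔ 0 < signsum x :=
  ⟨fun h => h.elim (fun h => signsum_pos_of_paretoDom_zero h.2) id, Or.inr⟩

lemma zero_reDom_iff {x : ℤ × ℤ} : reDom (0, 0) x ↔ signsum x < 0 :=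
  ⟨fun h => h.elim (fun h => signsum_neg_of_zero_paretoDom h.2) id, Or.inr⟩

lemma reEq_zero_iff {x : ℤ × ℤ} : reEq x (0, 0) ↔ signsum x = 0 := by
  rw [reEq, reDom_zero_iff, zero_reDom_iff]
  omega

lemma signsum_eq_of_reEq {x y : ℤ × ℤ} (h : reEq x y) : signsum x = signsum y :=
  le_antisymm (not_lt.1 fun hlt => h.1 (Or.inr hlt)) (not_lt.1 fun hlt => h.2 (Or.inr hlt))

/-- All elements of a non-dominated set are equivalent w.r.t. comparison
with (0,0). -/
theorem nondominated_zero_comparison (S : Set (ℤ × ℤ))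
    (hS : ∀ x ∈ S, ∀ y ∈ S, reEq x y) (x y : ℤ × ℤ) (hx : x ∈ S) (hy : y ∈ S) :
    (reDom x (0, 0) → reDom y (0, 0)) ∧
    (reDom (0, 0) x → reDom (0, 0) y) ∧
    (reEq x (0, 0) → reEq y (0, 0)) := by
  have hxy : signsum x = signsum y := signsum_eq_of_reEq (hS x hx y hy)
  simp only [reDom_zero_iff, zero_reDom_iff, reEq_zero_iff, hxy]
  exact ⟨id, id, id⟩
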